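/- Let η = diag(1, 2, 2) ∈ GL₃(ℚ₂) and let L ⊆ GL₃(ℤ₂) be the parahoric subgroup of matrices whose reduction mod 2 has first column of the form (*,0,0)ᵀ. Then L ∩ ηLη⁻¹ is the subgroup of matrices in L whose first column reduces to (*,0,0)ᵀ mod 4, and this subgroup has index 4 in L. -/

import Mathlib

/-!
Write `Γ₀(I) ⊆ GL₃(ℤ₂)` for the matrices whose first column is `(*, 0, 0)ᵀ` modulo `I`, so
that `L = Γ₀(2)`. If `η b η⁻¹ = h` with `b, h` integral, then `h_{i0} = 2 b_{i0}` for `i ≠ 0`,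
and the other entries of `b` are those of `h`, doubled in the first row; conversely such a `b`
exists, and is invertible over `ℤ₂`, as soon as `2 ∣ h_{i0}`. Hence `b ∈ Γ₀(2)` exactly when
`h ∈ Γ₀(4)`, i.e. `L ∩ ηLη⁻¹ = Γ₀(4)`.

For the index: the corner entry `z₀₀` of `z ∈ Γ₀(2)` is a unit, hence `≡ 1 mod 2`, so for
`x ∈ Γ₀(2)` the first column of `xz` agrees with that of `x` modulo 4 below the corner iff
`z ∈ Γ₀(4)`. The cosets `x Γ₀(4)` are therefore classified by `(x₁₀, x₂₀) mod 4 ∈ (2ℤ/4ℤ)²`,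
and all four values occur.
-/

open Matrix

theorem Subgroup.index_eq_card_range {G X : Type*} [Group G] {H : Subgroup G} (f : G → X)
    (hf : ∀ x y, f x = f y ↔ x⁻¹ * y ∈ H) : H.index = Nat.card (Set.range f) :=
  Nat.card_congr <|
    (Quotient.congrRight fun x y => QuotientGroup.leftRel_apply.trans (hf x y).symm).trans
      (Setoid.quotientKerEquivRange f)

theorem ZMod.card_setOf_two_mul_eq_zero (ι : Type*) [Fintype ι] :
    Nat.card {v : ι → ZMod (2 ^ 2) | ∀ i, 2 * v i = 0} = 2 ^ Fintype.card ι := by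
  rw [Set.coe_ofPred, Nat.card_congr (Equiv.subtypePiEquivPi (β := fun _ => ZMod (2 ^ 2))
    (p := fun _ a => 2 * a = 0)), Nat.card_pi, Finset.prod_const, Finset.card_univ,
    Nat.card_eq_fintype_card (α := {a : ZMod (2 ^ 2) // 2 * a = 0})]
  rfl

namespace Matrix

variable {n R : Type*} [Fintype n] [DecidableEq n] [CommRing R]

theorem mul_apply_eq_add_sum_compl (A B : Matrix n n R) (i j k : n) :
    (A * B) i j = A i k * B k j + ∑ l ∈ {k}ᶜ, A i l * B l j := by
  rw [mul_apply, Fintype.sum_eq_add_sum_compl k]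

theorem mul_updateRow_zero_apply (A B : Matrix n n R) (i j k : n) :
    (A * updateRow B k 0) i j = ∑ l ∈ {k}ᶜ, A i l * B l j := by
  rw [mul_apply_eq_add_sum_compl _ _ _ _ k, updateRow_self, Pi.zero_apply, mul_zero, zero_add]
  exact Finset.sum_congr rfl fun l hl => by rw [updateRow_ne (by simpa using hl)]

theorem sum_compl_mul_mem {I : Ideal R} (A B : Matrix n n R) {i j k : n}
    (hB : ∀ l ≠ k, B l j ∈ I) : ∑ l ∈ {k}ᶜ, A i l * B l j ∈ I :=
  Ideal.sum_mem _ fun l hl => I.mul_mem_left _ (hB l (by simpa using hl))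

theorem isUnit_one_add_vecMulVec {c d : n → R} (hdc : d ⬝ᵥ c = 0) :
    IsUnit (1 + vecMulVec c d) :=
  IsNilpotent.isUnit_one_add ⟨2, by
    rw [pow_two, vecMulVec_mul_vecMulVec, hdc, zero_smul, vecMulVec_zero]⟩

end Matrix

namespace PadicInt

theorem toZMod_eq_zero_iff_mem_span_two {x : ℤ_[2]} : toZMod x = 0 ↔ x ∈ Ideal.span {2} := by
  rw [← RingHom.mem_ker, ker_toZMod, maximalIdeal_eq_span_p, Nat.cast_ofNat]

theorem toZModPow_eq_zero_iff_mem_span_two_pow {k : ℕ} {x : ℤ_[2]} :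
    toZModPow k x = 0 ↔ x ∈ Ideal.span {2 ^ k} := by
  rw [← RingHom.mem_ker, ker_toZModPow, Nat.cast_ofNat]

theorem sub_one_mem_span_two_of_mul_sub_one_mem {a b : ℤ_[2]}
    (h : a * b - 1 ∈ Ideal.span {2}) : b - 1 ∈ Ideal.span {2} := by
  rw [← toZMod_eq_zero_iff_mem_span_two, map_sub, map_one] at h ⊢
  rw [map_mul] at h
  generalize toZMod a = s at h
  generalize toZMod b = t at h ⊢
  revert s t
  decide

theorem mul_mem_span_two_pow_two {a b : ℤ_[2]} (ha : a ∈ Ideal.span {2})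
    (hb : b ∈ Ideal.span {2}) : a * b ∈ Ideal.span {2 ^ 2} := by
  rw [pow_two, ← Ideal.span_singleton_mul_span_singleton]
  exact Ideal.mul_mem_mul ha hb

end PadicInt

namespace Matrix.GeneralLinearGroup

variable {n R : Type*} [Fintype n] [DecidableEq n] [CommRing R] {i₀ : n} {I : Ideal R}

theorem map_injective {S : Type*} [CommRing S] {f : R →+* S} (hf : Function.Injective f) :
    Function.Injective (map f : GL n R →* GL n S) :=
  fun _ _ hab => Units.ext (Matrix.map_injective hf (congrArg Units.val hab))

theorem inv_mul_apply_sub_one_mem {x : GL n R} (hx : ∀ i ≠ i₀, x i i₀ ∈ I) :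
    (x⁻¹ : GL n R) i₀ i₀ * x i₀ i₀ - 1 ∈ I := by
  have h := congrFun₂ x.inv_mul i₀ i₀
  rw [mul_apply_eq_add_sum_compl _ _ _ _ i₀, one_apply_eq] at h
  rw [← h, sub_add_cancel_left, Ideal.neg_mem_iff]
  exact sum_compl_mul_mem _ _ hx

theorem inv_apply_mem {x : GL n R} (hx : ∀ i ≠ i₀, x i i₀ ∈ I) {i : n} (hi : i ≠ i₀) :
    (x⁻¹ : GL n R) i i₀ ∈ I := by
  set y : Matrix n n R := ((x⁻¹ : GL n R) : Matrix n n R)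
  have h := congrFun₂ x.inv_mul i i₀
  rw [mul_apply_eq_add_sum_compl _ _ _ _ i₀, one_apply_ne hi, ← eq_neg_iff_add_eq_zero] at h
  have hoff : y i i₀ * x i₀ i₀ ∈ I := by
    rw [h, Ideal.neg_mem_iff]
    exact sum_compl_mul_mem _ _ hx
  -- `x i₀ i₀` is invertible modulo `I`, with inverse `y i₀ i₀`
  have hy : y i i₀ = y i₀ i₀ * (y i i₀ * x i₀ i₀) - y i i₀ * (y i₀ i₀ * x i₀ i₀ - 1) := by
    ring
  rw [hy]
  exact I.sub_mem (I.mul_mem_left _ hoff) (I.mul_mem_left _ (inv_mul_apply_sub_one_mem hx))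

variable (i₀ I) in
def gamma0 : Subgroup (GL n R) where
  carrier := {x | ∀ i ≠ i₀, x i i₀ ∈ I}
  mul_mem' {x y} hx hy i hi := by
    rw [Units.val_mul, mul_apply_eq_add_sum_compl _ _ _ _ i₀]
    exact I.add_mem (I.mul_mem_right _ (hx i hi)) (sum_compl_mul_mem _ _ hy)
  one_mem' i hi := by simp [one_apply_ne hi]
  inv_mem' hx _ hi := inv_apply_mem hx hi

theorem mem_gamma0 {x : GL n R} : x ∈ gamma0 i₀ I ↔ ∀ i ≠ i₀, x i i₀ ∈ I := Iff.rfl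

theorem gamma0_mono {J : Ideal R} (hIJ : I ≤ J) : gamma0 i₀ I ≤ gamma0 i₀ J :=
  fun _ hx i hi => hIJ (hx i hi)

theorem apply_mem_of_mul_apply_mem {J : Ideal R} (hJI : J * J ≤ I) {x : GL n R}
    (hx : x ∈ gamma0 i₀ J) {W : Matrix n n R} (hW : ∀ l, W l i₀ ∈ J)
    (hxW : ∀ i ≠ i₀, (x * W) i i₀ ∈ I) {j : n} (hj : j ≠ i₀) : W j i₀ ∈ I := by
  have hW' : W = (x⁻¹ : GL n R) * (x * W) := by
    rw [← mul_assoc, ← Units.val_mul, inv_mul_cancel, Units.val_one, one_mul]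
  rw [hW', mul_apply_eq_add_sum_compl _ _ _ _ i₀]
  refine I.add_mem (hJI (Ideal.mul_mem_mul (inv_apply_mem hx hj) ?_)) (sum_compl_mul_mem _ _ hxW)
  rw [mul_apply]
  exact Ideal.sum_mem _ fun l _ => J.mul_mem_left _ (hW l)

section Conjugation

variable (i₀) in
def eta (ϖ : R) : Matrix n n R := diagonal fun i => if i = i₀ then 1 else ϖ

variable {ϖ : R}

theorem apply_eq_mul_of_eta_mul_eq {B H : Matrix n n R} (hBH : eta i₀ ϖ * B = H * eta i₀ ϖ)
    {i : n} (hi : i ≠ i₀) : H i i₀ = ϖ * B i i₀ := by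
  simpa [eta, diagonal_mul, mul_diagonal, hi] using (congrFun₂ hBH i i₀).symm

theorem exists_eta_mul_eq {H : Matrix n n R} (hH : ∀ i ≠ i₀, ϖ ∣ H i i₀) :
    ∃ B, eta i₀ ϖ * B = H * eta i₀ ϖ := by
  choose c hc using hH
  refine ⟨of fun i j => if hi : i = i₀ then H i j * (if j = i₀ then 1 else ϖ)
    else if j = i₀ then c i hi else H i j, ?_⟩
  ext i j
  by_cases hi : i = i₀
  · subst hi
    simp [eta, diagonal_mul, mul_diagonal]
  · by_cases hj : j = i₀
    · subst hj
      simp [eta, diagonal_mul, mul_diagonal, hi, hc]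
    · simp [eta, diagonal_mul, mul_diagonal, hi, hj, mul_comm]

theorem conj_map_eq_map_iff {S : Type*} [CommRing S] {f : R →+* S} (hf : Function.Injective f)
    {η : GL n S} (hη : (η : Matrix n n S) = (eta i₀ ϖ).map f) (b h : GL n R) :
    MulAut.conj η (map f b) = map f h ↔ eta i₀ ϖ * b = h * eta i₀ ϖ := by
  rw [MulAut.conj_apply, mul_inv_eq_iff_eq_mul, Units.ext_iff, Units.val_mul, Units.val_mul, hη]
  change (eta i₀ ϖ).map f * (b : Matrix n n R).map f =
    (h : Matrix n n R).map f * (eta i₀ ϖ).map f ↔ _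
  rw [← Matrix.map_mul, ← Matrix.map_mul]
  exact (Matrix.map_injective hf).eq_iff

variable [IsDomain R]

theorem eta_mul_left_cancel (hϖ : ϖ ≠ 0) {M N : Matrix n n R}
    (h : eta i₀ ϖ * M = eta i₀ ϖ * N) : M = N := by
  ext i j
  have hij := congrFun₂ h i j
  simp only [eta, diagonal_mul] at hij
  refine mul_left_cancel₀ ?_ hij
  split_ifs
  exacts [one_ne_zero, hϖ]

theorem exists_eta_mul_eq_mul_eta (hϖ : ϖ ≠ 0) {h : GL n R}
    (hh : h ∈ gamma0 i₀ (Ideal.span {ϖ})) :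
    ∃ b : GL n R, eta i₀ ϖ * b = h * eta i₀ ϖ := by
  have hdvd {x : GL n R} (hx : x ∈ gamma0 i₀ (Ideal.span {ϖ})) :
      ∀ i ≠ i₀, ϖ ∣ x i i₀ :=
    fun i hi => Ideal.mem_span_singleton.mp (hx i hi)
  obtain ⟨B, hB⟩ := exists_eta_mul_eq (hdvd hh)
  obtain ⟨C, hC⟩ := exists_eta_mul_eq (hdvd (inv_mem hh))
  refine ⟨⟨B, C, eta_mul_left_cancel (i₀ := i₀) hϖ ?_,
    eta_mul_left_cancel (i₀ := i₀) hϖ ?_⟩, hB⟩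
  · rw [← mul_assoc, hB, mul_assoc, hC, ← mul_assoc, ← Units.val_mul, mul_inv_cancel,
      Units.val_one, one_mul, mul_one]
  · rw [← mul_assoc, hC, mul_assoc, hB, ← mul_assoc, ← Units.val_mul, inv_mul_cancel,
      Units.val_one, one_mul, mul_one]

theorem mem_gamma0_iff_of_eta_mul_eq (hϖ : ϖ ≠ 0) {b h : GL n R}
    (hbh : eta i₀ ϖ * b = h * eta i₀ ϖ) :
    b ∈ gamma0 i₀ (Ideal.span {ϖ}) ↔ h ∈ gamma0 i₀ (Ideal.span {ϖ ^ 2}) := by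
  simp only [mem_gamma0, Ideal.mem_span_singleton]
  refine forall₂_congr fun i hi => ?_
  rw [apply_eq_mul_of_eta_mul_eq hbh hi, pow_two, mul_dvd_mul_iff_left hϖ]

theorem gamma0_map_inf_map_conj {S : Type*} [CommRing S] {f : R →+* S} (hϖ : ϖ ≠ 0)
    (hf : Function.Injective f) {η : GL n S} (hη : (η : Matrix n n S) = (eta i₀ ϖ).map f) :
    (gamma0 i₀ (Ideal.span {ϖ})).map (map f) ⊓
        ((gamma0 i₀ (Ideal.span {ϖ})).map (map f)).map (MulAut.conj η).toMonoidHom =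
      (gamma0 i₀ (Ideal.span {ϖ ^ 2})).map (map f) := by
  ext g
  simp only [Subgroup.mem_inf, Subgroup.mem_map, MulEquiv.coe_toMonoidHom]
  constructor
  · rintro ⟨⟨h, -, rfl⟩, _, ⟨b, hb, rfl⟩, hconj⟩
    have hbh := (conj_map_eq_map_iff hf hη b h).mp hconj
    exact ⟨h, (mem_gamma0_iff_of_eta_mul_eq hϖ hbh).mp hb, rfl⟩
  · rintro ⟨h, hh, rfl⟩
    have hh' : h ∈ gamma0 i₀ (Ideal.span {ϖ}) :=
      gamma0_mono (Ideal.span_singleton_le_span_singleton.mpr (dvd_pow_self ϖ two_ne_zero)) hh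
    obtain ⟨b, hbh⟩ := exists_eta_mul_eq_mul_eta hϖ hh'
    exact ⟨⟨h, hh', rfl⟩, _, ⟨b, (mem_gamma0_iff_of_eta_mul_eq hϖ hbh).mpr hh, rfl⟩,
      (conj_map_eq_map_iff hf hη b h).mpr hbh⟩

end Conjugation

section TwoAdic

open PadicInt

theorem apply_sub_one_mem_of_mem_gamma0_two {x : GL n ℤ_[2]}
    (hx : x ∈ gamma0 i₀ (Ideal.span {2})) : x i₀ i₀ - 1 ∈ Ideal.span {2} :=
  sub_one_mem_span_two_of_mul_sub_one_mem (inv_mul_apply_sub_one_mem hx)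

theorem mem_gamma0_four_iff {x z : GL n ℤ_[2]} (hx : x ∈ gamma0 i₀ (Ideal.span {2}))
    (hz : z ∈ gamma0 i₀ (Ideal.span {2})) :
    z ∈ gamma0 i₀ (Ideal.span {2 ^ 2}) ↔
      ∀ i ≠ i₀, (x * z) i i₀ - x i i₀ ∈ Ideal.span {2 ^ 2} := by
  set W := updateRow (z : Matrix n n ℤ_[2]) i₀ 0
  have hsplit (i : n) :
      (x * z) i i₀ - x i i₀ = x i i₀ * (z i₀ i₀ - 1) + (x * W) i i₀ := by
    rw [Units.val_mul, mul_apply_eq_add_sum_compl _ _ _ _ i₀, mul_updateRow_zero_apply]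
    ring
  have hdiag {i : n} (hi : i ≠ i₀) : x i i₀ * (z i₀ i₀ - 1) ∈ Ideal.span {2 ^ 2} :=
    mul_mem_span_two_pow_two (hx i hi) (apply_sub_one_mem_of_mem_gamma0_two hz)
  simp only [hsplit]
  constructor
  · intro hz4 i hi
    rw [mul_updateRow_zero_apply]
    exact Ideal.add_mem _ (hdiag hi) (sum_compl_mul_mem _ _ hz4)
  · intro h j hj
    have hW (l : n) : W l i₀ ∈ Ideal.span {2} := by
      rcases eq_or_ne l i₀ with rfl | hl
      · simp [W]
      · simpa [W, updateRow_ne hl] using hz l hl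
    simpa [W, updateRow_ne hj] using apply_mem_of_mul_apply_mem
      (by rw [pow_two, Ideal.span_singleton_mul_span_singleton]) hx hW
      (fun i hi => (Ideal.add_mem_iff_right _ (hdiag hi)).mp (h i hi)) hj

theorem range_toZModPow_col :
    Set.range (fun (x : gamma0 i₀ (Ideal.span {(2 : ℤ_[2])})) (i : {i // i ≠ i₀}) =>
      toZModPow 2 ((x : GL n ℤ_[2]) i i₀)) = {v | ∀ i, 2 * v i = 0} := by
  ext v
  constructor
  · rintro ⟨x, rfl⟩ i
    rw [← map_ofNat (toZModPow 2) 2, ← map_mul, toZModPow_eq_zero_iff_mem_span_two_pow]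
    exact mul_mem_span_two_pow_two (Ideal.mem_span_singleton_self 2) (x.2 i i.2)
  · intro hv
    set c : n → ℤ_[2] := fun i => if h : i = i₀ then 0 else ((v ⟨i, h⟩).val : ℤ_[2])
    have hc (i : {i // i ≠ i₀}) : toZModPow 2 (c i) = v i := by
      simp [c, i.2]
    have hc2 {i : n} (hi : i ≠ i₀) : c i ∈ Ideal.span {2} := by
      have h2c : 2 * c i ∈ Ideal.span {2 ^ 2} := by
        rw [← toZModPow_eq_zero_iff_mem_span_two_pow, map_mul, map_ofNat, hc ⟨i, hi⟩, hv]
      rw [Ideal.mem_span_singleton, pow_two, mul_dvd_mul_iff_left two_ne_zero] at h2c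
      exact Ideal.mem_span_singleton.mpr h2c
    set u := (isUnit_one_add_vecMulVec (c := c) (d := Pi.single i₀ 1) (by simp [c])).unit
    have hu {i : n} (hi : i ≠ i₀) : u i i₀ = c i := by
      simp [u, vecMulVec_apply, one_apply_ne hi]
    exact ⟨⟨u, fun i hi => hu hi ▸ hc2 hi⟩, funext fun i => by simp only [hu i.2, hc]⟩

theorem relIndex_gamma0_four_two :
    (gamma0 i₀ (Ideal.span {(2 : ℤ_[2]) ^ 2})).relIndex (gamma0 i₀ (Ideal.span {2})) =
      2 ^ (Fintype.card n - 1) := by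
  rw [Subgroup.relIndex, Subgroup.index_eq_card_range _ fun x y => ?_, range_toZModPow_col]
  · rw [ZMod.card_setOf_two_mul_eq_zero]
    simp
  · rw [Subgroup.mem_subgroupOf, Subgroup.coe_mul, Subgroup.coe_inv,
      mem_gamma0_four_iff x.2 (mul_mem (inv_mem x.2) y.2), mul_inv_cancel_left, funext_iff,
      Subtype.forall]
    refine forall₂_congr fun i hi => ?_
    rw [eq_comm, ← sub_eq_zero, ← map_sub, toZModPow_eq_zero_iff_mem_span_two_pow]

end TwoAdic

end Matrix.GeneralLinearGroup

open Matrix.GeneralLinearGroup PadicInt in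
/-- Let `η = diag(1,2,2) ∈ GL₃(ℚ₂)` and let `L` be (the image in `GL₃(ℚ₂)` of) the
parahoric subgroup of `GL₃(ℤ₂)` of matrices whose first column reduces to `(*,0,0)ᵀ`
mod 2.  Then `L ∩ ηLη⁻¹` consists of those elements of `L` whose first column reduces
to `(*,0,0)ᵀ` mod 4, and this subgroup has index 4 in `L`. -/
theorem parahoric_conj_diag122 (η : GL (Fin 3) ℚ_[2]) (L : Subgroup (GL (Fin 3) ℚ_[2]))
    (hη : (η : Matrix (Fin 3) (Fin 3) ℚ_[2]) = Matrix.diagonal ![1, 2, 2])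
    (hL : ∀ g : GL (Fin 3) ℚ_[2], g ∈ L ↔
      ∃ h : GL (Fin 3) ℤ_[2],
        Matrix.GeneralLinearGroup.map (PadicInt.Coe.ringHom : ℤ_[2] →+* ℚ_[2]) h = g ∧
        ∀ i : Fin 3, i ≠ 0 → PadicInt.toZMod ((h : Matrix (Fin 3) (Fin 3) ℤ_[2]) i 0) = 0) :
    (∀ g : GL (Fin 3) ℚ_[2],
      g ∈ L ⊓ Subgroup.map (MulAut.conj η).toMonoidHom L ↔
      ∃ h : GL (Fin 3) ℤ_[2],
        Matrix.GeneralLinearGroup.map (PadicInt.Coe.ringHom : ℤ_[2] →+* ℚ_[2]) h = g ∧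
        ∀ i : Fin 3, i ≠ 0 → PadicInt.toZModPow 2 ((h : Matrix (Fin 3) (Fin 3) ℤ_[2]) i 0) = 0) ∧
    (Subgroup.map (MulAut.conj η).toMonoidHom L).relIndex L = 4 := by
  have hcoe : Function.Injective (Coe.ringHom : ℤ_[2] →+* ℚ_[2]) := Subtype.coe_injective
  obtain rfl : L = (gamma0 0 (Ideal.span {2})).map (map Coe.ringHom) := by
    ext g
    simp only [hL, Subgroup.mem_map, mem_gamma0, toZMod_eq_zero_iff_mem_span_two, and_comm]
  have hη' : (η : Matrix (Fin 3) (Fin 3) ℚ_[2]) = (eta 0 (2 : ℤ_[2])).map Coe.ringHom := by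
    rw [hη, eta, diagonal_map (map_zero _)]
    congr 1
    funext i
    fin_cases i <;> simp [map_ofNat]
  have hinf := gamma0_map_inf_map_conj two_ne_zero hcoe hη'
  refine ⟨fun g => ?_, ?_⟩
  · simp only [hinf, Subgroup.mem_map, mem_gamma0, toZModPow_eq_zero_iff_mem_span_two_pow,
      and_comm]
  · rw [← Subgroup.inf_relIndex_left, hinf,
      Subgroup.relIndex_map_map_of_injective _ _ (map_injective hcoe), relIndex_gamma0_four_two]
    rfl
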